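/- arXiv:2411.14266 — 2 statements merged into one kernel-verified Lean document; each statement's English description precedes it below -/
import Mathlib

section
/- Law of Large Numbers exponential moment bound: For every λ∈(0,1/(2e)) there exists a finite constant C = C(λ) such that the following holds for all N≥1. Let ρ̄ be a probability density on ℝ×ℝ² and let φ ∈ L^∞((ℝ×ℝ²)²) satisfy the one-sided cancellation condition ∫_{ℝ×ℝ²} φ(z,w) ρ̄(w) dw = 0 for every z, and ‖φ‖_{L^∞} ≤ λ < 1/(2e). Then ∫_{(ℝ×ℝ²)^N} ρ̄^{⊗N}(Z^N) exp( (1/N) ∑_{j,k=1}^N φ(z_1,z_j) φ(z_1,z_k) ) dZ^N ≤ C. -/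
/-!
Write `T = ∑_{j ≥ 2} φ(z₁, z_j)`. Since `|φ(z₁, z₁)| ≤ λ`, the exponent is at most
`2λ² + 2T²/N`, so it suffices to bound `E exp(a T²)` for `a = 2/N`. Conditionally on `z₁`, `T` is
a sum of `N - 1` independent centred variables bounded by `λ`, hence sub-Gaussian with variance
proxy `(N - 1)λ²` by Hoeffding's lemma. Linearizing the square against a standard Gaussian `g`,
`exp(a T²) = E_g exp(√(2a) g T)`, and exchanging the two expectations gives
`E exp(a T²) ≤ E_g exp(2λ² g²) = (1 - 4λ²)^{-1/2}`, which is finite since `λ < 1/2`.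
-/

open MeasureTheory Real Set
open scoped BigOperators

noncomputable section

/-- The plane `ℝ²` as a Euclidean space. -/
abbrev E2 : Type := EuclideanSpace ℝ (Fin 2)

open ProbabilityTheory
open scoped ENNReal NNReal

lemma lintegral_ofReal_exp_mul_eq_ofReal_mgf {Ω : Type*} [MeasurableSpace Ω] {μ : Measure Ω}
    {X : Ω → ℝ} {t : ℝ} (hi : Integrable (fun ω ↦ exp (t * X ω)) μ) :
    ∫⁻ ω, ENNReal.ofReal (exp (t * X ω)) ∂μ = ENNReal.ofReal (mgf X μ t) :=
  (ofReal_integral_eq_lintegral_ofReal hi (ae_of_all _ fun _ ↦ (exp_pos _).le)).symm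

lemma lintegral_exp_mul_gaussianReal (m : ℝ) (v : ℝ≥0) (s : ℝ) :
    ∫⁻ x, ENNReal.ofReal (exp (s * x)) ∂gaussianReal m v
      = ENNReal.ofReal (exp (m * s + v * s ^ 2 / 2)) := by
  rw [lintegral_ofReal_exp_mul_eq_ofReal_mgf (integrable_exp_mul_gaussianReal s),
    mgf_fun_id_gaussianReal]

lemma lintegral_exp_mul_sq_gaussianReal {b : ℝ} (hb : b < 1 / 2) :
    ∫⁻ x, ENNReal.ofReal (exp (b * x ^ 2)) ∂gaussianReal 0 1 = ENNReal.ofReal (√(1 - 2 * b))⁻¹ := by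
  have hpdf (x : ℝ) : gaussianPDFReal 0 1 x * exp (b * x ^ 2)
      = (√(2 * π))⁻¹ * exp (-(1 / 2 - b) * x ^ 2) := by
    rw [gaussianPDFReal, NNReal.coe_one, mul_one, mul_assoc, ← exp_add]
    congr 2
    ring
  have hint : Integrable (fun x ↦ gaussianPDFReal 0 1 x * exp (b * x ^ 2)) := by
    simp_rw [hpdf]
    exact (integrable_exp_neg_mul_sq (by linarith)).const_mul _
  rw [gaussianReal_of_var_ne_zero _ one_ne_zero,
    lintegral_withDensity_eq_lintegral_mul _ (measurable_gaussianPDF 0 1) (by fun_prop)]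
  simp only [Pi.mul_apply, gaussianPDF, ← ENNReal.ofReal_mul (gaussianPDFReal_nonneg 0 1 _)]
  rw [← ofReal_integral_eq_lintegral_ofReal hint
    (ae_of_all _ fun x ↦ mul_nonneg (gaussianPDFReal_nonneg 0 1 x) (exp_pos _).le)]
  simp_rw [hpdf]
  rw [integral_const_mul, integral_gaussian, ← sqrt_inv, ← sqrt_mul (by positivity), ← sqrt_inv]
  congr 2
  field_simp

namespace ProbabilityTheory.HasSubgaussianMGF

variable {Ω : Type*} [MeasurableSpace Ω] {μ : Measure Ω} {X : Ω → ℝ} {c : ℝ≥0}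

lemma lintegral_exp_mul_sq_le [SFinite μ] (h : HasSubgaussianMGF X c μ) {a : ℝ} (ha : 0 ≤ a)
    (hac : 2 * a * c < 1) :
    ∫⁻ ω, ENNReal.ofReal (exp (a * X ω ^ 2)) ∂μ ≤ ENNReal.ofReal (√(1 - 2 * a * c))⁻¹ := by
  set s := √(2 * a)
  have hs : s ^ 2 = 2 * a := sq_sqrt (by positivity)
  have hlin (x : ℝ) : ENNReal.ofReal (exp (a * x ^ 2))
      = ∫⁻ g, ENNReal.ofReal (exp (s * g * x)) ∂gaussianReal 0 1 := by
    simp_rw [mul_right_comm s _ x]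
    rw [lintegral_exp_mul_gaussianReal]
    congr 2
    push_cast
    rw [mul_pow, hs]
    ring
  calc ∫⁻ ω, ENNReal.ofReal (exp (a * X ω ^ 2)) ∂μ
      = ∫⁻ ω, ∫⁻ g, ENNReal.ofReal (exp (s * g * X ω)) ∂gaussianReal 0 1 ∂μ := by
        simp_rw [hlin]
    _ = ∫⁻ g, ∫⁻ ω, ENNReal.ofReal (exp (s * g * X ω)) ∂μ ∂gaussianReal 0 1 :=
        lintegral_lintegral_swap
          ((measurable_snd.const_mul s).aemeasurable.mul h.aemeasurable.comp_fst).exp.ennreal_ofReal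
    _ ≤ ∫⁻ g, ENNReal.ofReal (exp ((a * c) * g ^ 2)) ∂gaussianReal 0 1 := by
        refine lintegral_mono fun g ↦ ?_
        rw [lintegral_ofReal_exp_mul_eq_ofReal_mgf (h.integrable_exp_mul _)]
        refine ENNReal.ofReal_le_ofReal ((h.mgf_le _).trans_eq ?_)
        rw [mul_pow, hs]
        ring_nf
    _ = ENNReal.ofReal (√(1 - 2 * a * c))⁻¹ := by
        rw [lintegral_exp_mul_sq_gaussianReal (by linarith), mul_assoc]

lemma sum_pi [IsProbabilityMeasure μ] (h : HasSubgaussianMGF X c μ) (ι : Type*) [Fintype ι] :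
    HasSubgaussianMGF (fun W : ι → Ω ↦ ∑ i, X (W i)) (Fintype.card ι * c)
      (Measure.pi fun _ ↦ μ) := by
  have hcoord (i : ι) : HasSubgaussianMGF (fun W : ι → Ω ↦ X (W i)) c (Measure.pi fun _ ↦ μ) :=
    .of_map (measurable_pi_apply i).aemeasurable
      (by rwa [(measurePreserving_eval (fun _ ↦ μ) i).map_eq])
  simpa [Finset.sum_const, nsmul_eq_mul] using
    sum_of_iIndepFun (iIndepFun_pi fun _ ↦ h.aemeasurable) (s := Finset.univ) fun i _ ↦ hcoord i

end ProbabilityTheory.HasSubgaussianMGF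

lemma ProbabilityTheory.hasSubgaussianMGF_of_abs_le_of_integral_eq_zero {Ω : Type*}
    [MeasurableSpace Ω] {μ : Measure Ω} [IsProbabilityMeasure μ] {X : Ω → ℝ} {lam : ℝ}
    (hm : AEMeasurable X μ) (hb : ∀ᵐ ω ∂μ, |X ω| ≤ lam) (hc : μ[X] = 0) :
    HasSubgaussianMGF X (‖lam‖₊ ^ 2) μ := by
  convert hasSubgaussianMGF_of_mem_Icc_of_integral_eq_zero hm
    (hb.mono fun ω hω ↦ abs_le.mp hω) hc using 2
  rw [sub_neg_eq_add, ← two_mul, nnnorm_mul]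
  simp

lemma MeasureTheory.lintegral_pi_fin_succ {α : Type*} [MeasurableSpace α] (μ : Measure α)
    [SigmaFinite μ] {n : ℕ} {F : α → (Fin n → α) → ℝ≥0∞} (hF : Measurable (Function.uncurry F)) :
    ∫⁻ Z, F (Z 0) (fun j ↦ Z j.succ) ∂Measure.pi (fun _ : Fin (n + 1) ↦ μ)
      = ∫⁻ z, ∫⁻ W, F z W ∂Measure.pi (fun _ ↦ μ) ∂μ := by
  calc _ = ∫⁻ p, Function.uncurry F p ∂μ.prod (Measure.pi fun _ ↦ μ) :=
        (measurePreserving_piFinSuccAbove (fun _ : Fin (n + 1) ↦ μ) 0).lintegral_comp_emb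
          (MeasurableEquiv.measurableEmbedding _) _
    _ = _ := lintegral_prod _ hF.aemeasurable

lemma one_div_mul_add_sq_le {c T lam N : ℝ} (hc : |c| ≤ lam) (hN : 1 ≤ N) :
    1 / N * (c + T) ^ 2 ≤ 2 * lam ^ 2 + 2 / N * T ^ 2 := by
  have hc2 : c ^ 2 ≤ lam ^ 2 := sq_le_sq' (abs_le.mp hc).1 (abs_le.mp hc).2
  have h1N : 1 / N ≤ 1 := by rw [div_le_one (by linarith)]; exact hN
  have hN0 : 0 ≤ 1 / N := by positivity
  calc 1 / N * (c + T) ^ 2 ≤ 1 / N * (2 * c ^ 2 + 2 * T ^ 2) := by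
        gcongr; nlinarith [sq_nonneg (c - T)]
    _ = 1 / N * (2 * c ^ 2) + 2 / N * T ^ 2 := by ring
    _ ≤ 1 * (2 * lam ^ 2) + 2 / N * T ^ 2 := by gcongr
    _ = 2 * lam ^ 2 + 2 / N * T ^ 2 := by ring

section
variable {α : Type*} [MeasurableSpace α] {μ : Measure α} [IsProbabilityMeasure μ]
  {f : α → α → ℝ} {lam : ℝ}

theorem lintegral_exp_mul_sq_sum_succ_le (hf : Measurable (Function.uncurry f))
    (hb : ∀ z w, |f z w| ≤ lam) (h0 : ∀ z, ∫ w, f z w ∂μ = 0) {n : ℕ} {a : ℝ} (ha : 0 ≤ a)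
    (hna : 2 * a * (n * lam ^ 2) < 1) :
    ∫⁻ Z, ENNReal.ofReal (exp (a * (∑ j : Fin n, f (Z 0) (Z j.succ)) ^ 2))
        ∂Measure.pi (fun _ : Fin (n + 1) ↦ μ)
      ≤ ENNReal.ofReal (√(1 - 2 * a * (n * lam ^ 2)))⁻¹ := by
  rw [lintegral_pi_fin_succ μ (F := fun z W ↦ ENNReal.ofReal (exp (a * (∑ j, f z (W j)) ^ 2)))
    (by fun_prop)]
  calc ∫⁻ z, ∫⁻ W, ENNReal.ofReal (exp (a * (∑ j, f z (W j)) ^ 2)) ∂Measure.pi (fun _ ↦ μ) ∂μ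
      ≤ ∫⁻ _, ENNReal.ofReal (√(1 - 2 * a * (n * lam ^ 2)))⁻¹ ∂μ := by
        refine lintegral_mono fun z ↦ ?_
        have hrow := (hasSubgaussianMGF_of_abs_le_of_integral_eq_zero (μ := μ)
          hf.of_uncurry_left.aemeasurable (ae_of_all _ (hb z)) (h0 z)).sum_pi (Fin n)
        have hc : ((Fintype.card (Fin n) * ‖lam‖₊ ^ 2 : ℝ≥0) : ℝ) = n * lam ^ 2 := by simp
        simpa only [hc] using hrow.lintegral_exp_mul_sq_le ha (by rwa [hc])
    _ = ENNReal.ofReal (√(1 - 2 * a * (n * lam ^ 2)))⁻¹ := by simp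

theorem integral_exp_sum_mul_sum_pi_le (hf : Measurable (Function.uncurry f))
    (hb : ∀ z w, |f z w| ≤ lam) (h0 : ∀ z, ∫ w, f z w ∂μ = 0) (hlam : 4 * lam ^ 2 < 1) (n : ℕ) :
    ∫ Z, exp (1 / ((n + 1 : ℕ) : ℝ) * ∑ j, ∑ k, f (Z 0) (Z j) * f (Z 0) (Z k))
        ∂Measure.pi (fun _ : Fin (n + 1) ↦ μ)
      ≤ exp (2 * lam ^ 2) * (√(1 - 4 * lam ^ 2))⁻¹ := by
  set N : ℝ := ((n + 1 : ℕ) : ℝ)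
  have hN : 1 ≤ N := Nat.one_le_cast.mpr n.succ_pos
  have hnN : 2 * (2 / N) * (n * lam ^ 2) ≤ 4 * lam ^ 2 := by
    rw [show 2 * (2 / N) * (n * lam ^ 2) = 4 * lam ^ 2 * (n / N) by ring]
    refine mul_le_of_le_one_right (by positivity) ((div_le_one (by positivity)).mpr ?_)
    simp [N]
  have hsplit (Z : Fin (n + 1) → α) :
      exp (1 / N * ∑ j, ∑ k, f (Z 0) (Z j) * f (Z 0) (Z k))
        ≤ exp (2 * lam ^ 2) * exp (2 / N * (∑ j : Fin n, f (Z 0) (Z j.succ)) ^ 2) := by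
    rw [← exp_add, exp_le_exp, ← Fintype.sum_mul_sum, ← sq, Fin.sum_univ_succ]
    exact one_div_mul_add_sq_le (hb _ _) hN
  rw [integral_eq_lintegral_of_nonneg_ae (ae_of_all _ fun _ ↦ (exp_pos _).le)
    (Measurable.aestronglyMeasurable (by fun_prop))]
  refine ENNReal.toReal_le_of_le_ofReal (by positivity) ?_
  calc ∫⁻ Z, ENNReal.ofReal (exp (1 / N * ∑ j, ∑ k, f (Z 0) (Z j) * f (Z 0) (Z k)))
        ∂Measure.pi (fun _ : Fin (n + 1) ↦ μ)
      ≤ ∫⁻ Z, ENNReal.ofReal (exp (2 * lam ^ 2)) *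
          ENNReal.ofReal (exp (2 / N * (∑ j : Fin n, f (Z 0) (Z j.succ)) ^ 2))
        ∂Measure.pi (fun _ : Fin (n + 1) ↦ μ) := by
        refine lintegral_mono fun Z ↦ ?_
        rw [← ENNReal.ofReal_mul (exp_pos _).le]
        exact ENNReal.ofReal_le_ofReal (hsplit Z)
    _ = ENNReal.ofReal (exp (2 * lam ^ 2)) *
          ∫⁻ Z, ENNReal.ofReal (exp (2 / N * (∑ j : Fin n, f (Z 0) (Z j.succ)) ^ 2))
            ∂Measure.pi (fun _ : Fin (n + 1) ↦ μ) :=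
        lintegral_const_mul _ (by fun_prop)
    _ ≤ ENNReal.ofReal (exp (2 * lam ^ 2)) *
          ENNReal.ofReal (√(1 - 2 * (2 / N) * (n * lam ^ 2)))⁻¹ := by
        gcongr
        exact lintegral_exp_mul_sq_sum_succ_le hf hb h0 (by positivity) (by linarith)
    _ ≤ ENNReal.ofReal (exp (2 * lam ^ 2) * (√(1 - 4 * lam ^ 2))⁻¹) := by
        rw [ENNReal.ofReal_mul (exp_pos _).le]
        gcongr

end

lemma MeasureTheory.Measure.pi_withDensity_ofReal {ι : Type*} [Fintype ι] {α : ι → Type*}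
    [∀ i, MeasurableSpace (α i)] (ν : ∀ i, Measure (α i)) [∀ i, SigmaFinite (ν i)]
    {ρ : ∀ i, α i → ℝ} (hρ : ∀ i, Integrable (ρ i) (ν i)) (hρ0 : ∀ i x, 0 ≤ ρ i x) :
    Measure.pi (fun i ↦ (ν i).withDensity fun x ↦ ENNReal.ofReal (ρ i x))
      = (Measure.pi ν).withDensity fun Z ↦ ENNReal.ofReal (∏ i, ρ i (Z i)) := by
  have (i : ι) := isFiniteMeasure_withDensity_ofReal (hρ i).2
  refine Measure.pi_eq fun s hs ↦ ?_
  have hbox : (univ.pi s).indicator (fun Z ↦ ENNReal.ofReal (∏ i, ρ i (Z i)))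
      = fun Z ↦ ENNReal.ofReal (∏ i, (s i).indicator (ρ i) (Z i)) := by
    ext Z
    by_cases hZ : Z ∈ univ.pi s
    · simp_all
    · obtain ⟨i, hi⟩ : ∃ i, Z i ∉ s i := by simpa [Set.mem_univ_pi] using hZ
      rw [indicator_of_notMem hZ, Finset.prod_eq_zero (Finset.mem_univ i)
        (indicator_of_notMem hi _), ENNReal.ofReal_zero]
  rw [withDensity_apply _ (MeasurableSet.univ_pi hs), ← lintegral_indicator (.univ_pi hs), hbox,
    ← ofReal_integral_eq_lintegral_ofReal
      (Integrable.fintype_prod_dep fun i ↦ (hρ i).indicator (hs i))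
      (ae_of_all _ fun Z ↦ Finset.prod_nonneg fun i _ ↦ indicator_nonneg (fun x _ ↦ hρ0 i x) _),
    integral_fintype_prod_eq_prod,
    ENNReal.ofReal_prod_of_nonneg fun i _ ↦ integral_nonneg (indicator_nonneg (fun x _ ↦ hρ0 i x))]
  refine Finset.prod_congr rfl fun i _ ↦ ?_
  rw [withDensity_apply _ (hs i), integral_indicator (hs i),
    ofReal_integral_eq_lintegral_ofReal (hρ i).integrableOn (ae_of_all _ (hρ0 i))]

lemma integral_prod_mul_eq_integral_pi_withDensity {ι : Type*} [Fintype ι] {α : Type*}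
    [MeasurableSpace α] (ν : Measure α) [SigmaFinite ν] {ρ : α → ℝ} (hρm : Measurable ρ)
    (hρ : Integrable ρ ν) (hρ0 : ∀ x, 0 ≤ ρ x) (G : (ι → α) → ℝ) :
    ∫ Z, (∏ i, ρ (Z i)) * G Z ∂Measure.pi (fun _ ↦ ν)
      = ∫ Z, G Z ∂Measure.pi (fun _ ↦ ν.withDensity fun x ↦ ENNReal.ofReal (ρ x)) := by
  rw [Measure.pi_withDensity_ofReal (fun _ ↦ ν) (fun _ ↦ hρ) (fun _ ↦ hρ0),
    integral_withDensity_eq_integral_toReal_smul (by fun_prop)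
      (ae_of_all _ fun _ ↦ ENNReal.ofReal_lt_top)]
  simp_rw [ENNReal.toReal_ofReal (Finset.prod_nonneg fun i _ ↦ hρ0 _), smul_eq_mul]

/-- **Law of Large Numbers exponential moment bound** (Theorem 2.3, Jabin–Wang).
For every `λ ∈ (0, 1/(2e))` there is a finite constant `C` such that for every `N ≥ 1`,
every probability density `ρ̄` on `ℝ×ℝ²` and every bounded test function `φ` with
`‖φ‖_∞ ≤ λ` satisfying the one-sided cancellation `∫ φ(z,w) ρ̄(w) dw = 0` for all `z`,
the exponential moment `∫ ρ̄^{⊗N} exp((1/N) ∑_{j,k} φ(z₁,z_j)φ(z₁,z_k))` is at most `C`. -/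
theorem law_of_large_numbers_exponential_bound
    (lam : ℝ) (hlam0 : 0 < lam) (hlam : lam < 1 / (2 * Real.exp 1)) :
    ∃ C : ℝ, ∀ (N : ℕ) (hN : 1 ≤ N),
      ∀ ρ : ℝ × E2 → ℝ,
        Measurable ρ → (∀ z, 0 ≤ ρ z) → (∫ z : ℝ × E2, ρ z = 1) →
      ∀ φ : ℝ × E2 → ℝ × E2 → ℝ,
        Measurable (fun p : (ℝ × E2) × (ℝ × E2) => φ p.1 p.2) →
        (∀ z w, |φ z w| ≤ lam) →
        (∀ z, ∫ w : ℝ × E2, φ z w * ρ w = 0) →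
        (∫ Z : Fin N → ℝ × E2, (∏ i, ρ (Z i)) *
            Real.exp ((1 / (N : ℝ)) * ∑ j : Fin N, ∑ k : Fin N,
              φ (Z ⟨0, hN⟩) (Z j) * φ (Z ⟨0, hN⟩) (Z k)))
          ≤ C := by
  have hlam4 : 4 * lam ^ 2 < 1 := by
    have : 1 / (2 * exp 1) < 1 / 2 := by
      gcongr
      linarith [add_one_lt_exp one_ne_zero]
    nlinarith
  refine ⟨exp (2 * lam ^ 2) * (√(1 - 4 * lam ^ 2))⁻¹, ?_⟩
  intro N hN ρ hρm hρ0 hρ1 φ hφm hφb hφ0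
  obtain ⟨n, rfl⟩ : ∃ n, N = n + 1 := ⟨N - 1, by omega⟩
  have hρ : Integrable ρ := Integrable.of_integral_ne_zero (by rw [hρ1]; exact one_ne_zero)
  set μ := (volume : Measure (ℝ × E2)).withDensity fun z ↦ ENNReal.ofReal (ρ z)
  have : IsProbabilityMeasure μ := ⟨by
    rw [withDensity_apply _ MeasurableSet.univ, Measure.restrict_univ,
      ← ofReal_integral_eq_lintegral_ofReal hρ (ae_of_all _ hρ0), hρ1, ENNReal.ofReal_one]⟩
  have hcancel (z : ℝ × E2) : ∫ w, φ z w ∂μ = 0 := by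
    rw [integral_withDensity_eq_integral_toReal_smul (by fun_prop)
      (ae_of_all _ fun _ ↦ ENNReal.ofReal_lt_top), ← hφ0 z]
    simp_rw [ENNReal.toReal_ofReal (hρ0 _), smul_eq_mul, mul_comm]
  rw [volume_pi, integral_prod_mul_eq_integral_pi_withDensity volume hρm hρ hρ0]
  exact integral_exp_sum_mul_sum_pi_le hφm hφb hcancel hlam4 n
end
end

section
/- Closed-form evaluation of the iterated integrals: Let f : [0,∞) → ℝ_{≥0} be continuous and set φ(t) = ∫_0^t f(s) ds. For integers 1 ≤ k ≤ l define B_k^l and A_k^l on [0,∞) by the recursions B_k^k(t) = e^{−kφ(t)}; B_k^l(t) = k ∫_0^t e^{−k(φ(t)−φ(s))} f(s) B_{k+1}^l(s) ds for k < l; A_k^k(t) = 1 − e^{−kφ(t)}; and A_k^l(t) = A_k^{l−1}(t) − B_k^l(t) for k < l. Then for all 1 ≤ k ≤ l and t ≥ 0: B_k^l(t) = C(l−1, k−1) · (1 − e^{−φ(t)})^{l−k} · e^{−kφ(t)}, and A_k^l(t) = ( l! / ((l−k)!(k−1)!) ) ∫_{e^{−φ(t)}}^{1} z^{k−1} (1−z)^{l−k}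 dz; in particular A_k^l(t) = P(Y > e^{−φ(t)}) where Y has the Beta(k, l−k+1) distribution. -/
/-!
With `x = e^{-φ(t)}`, `B_k^l(t)` is the negative binomial probability that the `k`-th success
of independent trials with success probability `x` occurs at trial `l`, and
`A_k^l(t) = 1 - ∑_{k ≤ i ≤ l} B_k^i(t)` is the probability that it occurs later, i.e. the tail
of `Beta(k, l - k + 1)` at `x`. Both follow by induction on `l - k`. For `B` the recursion
integral is computed by the substitution `z = 1 - e^{-φ(s)}`, as `dz = e^{-φ(s)} f(s) ds`.
For `A` the step is one integration by parts of the incomplete Beta integral, whose boundary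
term is the new negative binomial weight.
-/

open MeasureTheory Real Set

noncomputable section

lemma exp_neg_natCast_mul (k : ℕ) (x : ℝ) : exp (-(k : ℝ) * x) = exp (-x) ^ k := by
  rw [← Real.exp_nat_mul, neg_mul_comm]

-- `B_k^l` and `A_k^l` are indexed by `j = k - 1` and `n = l - k`, avoiding natural subtraction.
def negBinomialWeight (j n : ℕ) (x : ℝ) : ℝ :=
  (j + n).choose j * (1 - x) ^ n * x ^ (j + 1)

def betaTail (j m : ℕ) (x : ℝ) : ℝ :=
  (j + 1 + m).factorial / (m.factorial * j.factorial) * ∫ z in x..1, z ^ j * (1 - z) ^ m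

lemma hasDerivAt_pow_succ_mul_one_sub_pow_succ (j m : ℕ) (z : ℝ) :
    HasDerivAt (fun z : ℝ => z ^ (j + 1) * (1 - z) ^ (m + 1))
      ((j + m + 2) * (z ^ j * (1 - z) ^ (m + 1)) - (m + 1) * (z ^ j * (1 - z) ^ m)) z := by
  refine ((hasDerivAt_pow (j + 1) z).mul
    (((hasDerivAt_id z).const_sub 1).pow (m + 1))).congr_deriv ?_
  simp only [Pi.pow_apply, id_eq]
  push_cast
  ring

lemma integral_pow_mul_one_sub_pow_succ (j m : ℕ) (x : ℝ) :
    (j + m + 2) * ∫ z in x..1, z ^ j * (1 - z) ^ (m + 1)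
      = (m + 1) * (∫ z in x..1, z ^ j * (1 - z) ^ m) - x ^ (j + 1) * (1 - x) ^ (m + 1) := by
  have hcont : ∀ n : ℕ, IntervalIntegrable (fun z : ℝ => z ^ j * (1 - z) ^ n) volume x 1 :=
    fun n => by apply Continuous.intervalIntegrable; fun_prop
  have hftc := intervalIntegral.integral_eq_sub_of_hasDerivAt
    (fun z _ => hasDerivAt_pow_succ_mul_one_sub_pow_succ j m z)
    (((hcont (m + 1)).const_mul _).sub ((hcont m).const_mul _))
  rw [intervalIntegral.integral_sub ((hcont (m + 1)).const_mul _) ((hcont m).const_mul _),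
    intervalIntegral.integral_const_mul, intervalIntegral.integral_const_mul] at hftc
  simp only [sub_self, zero_pow (Nat.succ_ne_zero m), mul_zero, zero_sub] at hftc
  linarith

lemma betaTail_zero (j : ℕ) (x : ℝ) : betaTail j 0 x = 1 - x ^ (j + 1) := by
  simp only [betaTail, pow_zero, mul_one, integral_pow, add_zero, Nat.factorial_zero,
    Nat.factorial_succ, one_pow]
  push_cast
  field_simp

lemma betaTail_succ (j m : ℕ) (x : ℝ) :
    betaTail j (m + 1) x = betaTail j m x - negBinomialWeight j (m + 1) x := by
  have hchoose : ((j + (m + 1)).choose j : ℝ)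
      = (j + 1 + m).factorial / ((m + 1).factorial * j.factorial) := by
    rw [Nat.cast_choose ℝ (by omega : j ≤ j + (m + 1)), show j + (m + 1) - j = m + 1 by omega,
      show j + (m + 1) = j + 1 + m by omega, mul_comm]
  have hstep := integral_pow_mul_one_sub_pow_succ j m x
  simp only [betaTail, negBinomialWeight, hchoose, show j + 1 + (m + 1) = j + 1 + m + 1 by omega,
    Nat.factorial_succ]
  push_cast
  field_simp
  linear_combination hstep

section
variable {f φ : ℝ → ℝ}

lemma integral_one_sub_exp_neg_pow_mul (hf : Continuous f) (hφ : ∀ s, HasDerivAt φ (f s) s)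
    (n : ℕ) (a b : ℝ) :
    ∫ s in a..b, (1 - exp (-φ s)) ^ n * (exp (-φ s) * f s)
      = ((1 - exp (-φ b)) ^ (n + 1) - (1 - exp (-φ a)) ^ (n + 1)) / (n + 1) := by
  have hφc : Continuous φ := continuous_iff_continuousAt.2 fun s => (hφ s).continuousAt
  have hderiv : ∀ s, HasDerivAt (fun s => (1 - exp (-φ s)) ^ (n + 1) / (n + 1))
      ((1 - exp (-φ s)) ^ n * (exp (-φ s) * f s)) s := by
    intro s
    refine (((((hφ s).neg.exp).const_sub 1).pow (n + 1)).div_const _).congr_deriv ?_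
    simp only [Pi.neg_apply]
    push_cast
    field_simp
  rw [intervalIntegral.integral_eq_sub_of_hasDerivAt (fun s _ => hderiv s)
    (by apply Continuous.intervalIntegrable; fun_prop)]
  ring

lemma mul_integral_exp_mul_negBinomialWeight (hf : Continuous f)
    (hφ : ∀ s, HasDerivAt φ (f s) s) (hφ0 : φ 0 = 0) (j n : ℕ) (t : ℝ) :
    ((j + 1 : ℕ) : ℝ) * ∫ s in (0 : ℝ)..t,
        exp (-((j + 1 : ℕ) : ℝ) * (φ t - φ s)) * f s
          * negBinomialWeight (j + 1) n (exp (-φ s))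
      = negBinomialWeight j (n + 1) (exp (-φ t)) := by
  have hexp : ∀ s, exp (-((j + 1 : ℕ) : ℝ) * (φ t - φ s)) * exp (-φ s) ^ (j + 1 + 1)
      = exp (-φ t) ^ (j + 1) * exp (-φ s) := by
    intro s
    rw [← Real.exp_nat_mul, ← Real.exp_nat_mul, ← Real.exp_add, ← Real.exp_add]
    congr 1
    push_cast
    ring
  have hintegrand : ∀ s, exp (-((j + 1 : ℕ) : ℝ) * (φ t - φ s)) * f s
        * negBinomialWeight (j + 1) n (exp (-φ s))
      = (j + 1 + n).choose (j + 1) * exp (-φ t) ^ (j + 1)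
        * ((1 - exp (-φ s)) ^ n * (exp (-φ s) * f s)) := by
    intro s
    rw [negBinomialWeight]
    linear_combination (((j + 1 + n).choose (j + 1) : ℝ) * (1 - exp (-φ s)) ^ n * f s) * hexp s
  have hchoose :
      ((j + 1 + n).choose (j + 1) : ℝ) * (j + 1) = (j + (n + 1)).choose j * (n + 1) := by
    have := Nat.choose_succ_right_eq (j + 1 + n) j
    rw [show j + 1 + n - j = n + 1 by omega, show j + 1 + n = j + (n + 1) by omega] at this
    rw [show j + 1 + n = j + (n + 1) by omega]
    exact_mod_cast this
  simp only [hintegrand]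
  simp only [intervalIntegral.integral_const_mul,
    integral_one_sub_exp_neg_pow_mul hf hφ, hφ0, neg_zero, exp_zero, sub_self,
    zero_pow (Nat.succ_ne_zero n), sub_zero, negBinomialWeight]
  push_cast
  field_simp
  linear_combination (1 - exp (-φ t)) ^ (n + 1) * hchoose

lemma B_eq_negBinomialWeight (hf : Continuous f) (hφ : ∀ s, HasDerivAt φ (f s) s)
    (hφ0 : φ 0 = 0) {B : ℕ → ℕ → ℝ → ℝ}
    (hBdiag : ∀ k, 1 ≤ k → ∀ t, B k k t = exp (-(k : ℝ) * φ t))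
    (hBrec : ∀ k l, 1 ≤ k → k < l → ∀ t,
      B k l t = (k : ℝ) * ∫ s in (0 : ℝ)..t,
        exp (-(k : ℝ) * (φ t - φ s)) * f s * B (k + 1) l s)
    (n j : ℕ) (t : ℝ) :
    B (j + 1) (j + 1 + n) t = negBinomialWeight j n (exp (-φ t)) := by
  induction n generalizing j t with
  | zero =>
    simp only [add_zero, hBdiag _ (Nat.le_add_left 1 j), exp_neg_natCast_mul, negBinomialWeight,
      Nat.choose_self, Nat.cast_one, pow_zero, one_mul]
  | succ n ih =>
    have ih' : ∀ s,
        B (j + 1 + 1) (j + 1 + (n + 1)) s = negBinomialWeight (j + 1) n (exp (-φ s)) :=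
      fun s => by rw [← ih]; ring_nf
    rw [hBrec _ _ (by omega) (by omega)]
    simp only [ih']
    exact mul_integral_exp_mul_negBinomialWeight hf hφ hφ0 j n t

lemma A_eq_betaTail {A B : ℕ → ℕ → ℝ → ℝ}
    (hB : ∀ n j t, B (j + 1) (j + 1 + n) t = negBinomialWeight j n (exp (-φ t)))
    (hAdiag : ∀ k, 1 ≤ k → ∀ t, A k k t = 1 - exp (-(k : ℝ) * φ t))
    (hArec : ∀ k l, 1 ≤ k → k < l → ∀ t, A k l t = A k (l - 1) t - B k l t)
    (m j : ℕ) (t : ℝ) :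
    A (j + 1) (j + 1 + m) t = betaTail j m (exp (-φ t)) := by
  induction m with
  | zero => rw [add_zero, hAdiag _ (by omega), exp_neg_natCast_mul, betaTail_zero]
  | succ m ih =>
    rw [hArec _ _ (by omega) (by omega), show j + 1 + (m + 1) - 1 = j + 1 + m by omega, ih, hB,
      betaTail_succ]

end

theorem iterated_integrals_closed_form_general
    (f : ℝ → ℝ) (hf : Continuous f)
    (φ : ℝ → ℝ) (hφ : ∀ t, φ t = ∫ s in (0 : ℝ)..t, f s)
    (B A : ℕ → ℕ → ℝ → ℝ)
    (hBdiag : ∀ k, 1 ≤ k → ∀ t, B k k t = Real.exp (-(k : ℝ) * φ t))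
    (hBrec : ∀ k l, 1 ≤ k → k < l → ∀ t,
      B k l t = (k : ℝ) * ∫ s in (0 : ℝ)..t,
        Real.exp (-(k : ℝ) * (φ t - φ s)) * f s * B (k + 1) l s)
    (hAdiag : ∀ k, 1 ≤ k → ∀ t, A k k t = 1 - Real.exp (-(k : ℝ) * φ t))
    (hArec : ∀ k l, 1 ≤ k → k < l → ∀ t, A k l t = A k (l - 1) t - B k l t) :
    ∀ k l, 1 ≤ k → k ≤ l → ∀ t, 0 ≤ t →
      B k l t = (Nat.choose (l - 1) (k - 1) : ℝ)
          * (1 - Real.exp (-φ t)) ^ (l - k) * Real.exp (-(k : ℝ) * φ t)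
      ∧ A k l t = ((Nat.factorial l : ℝ)
            / ((Nat.factorial (l - k) : ℝ) * (Nat.factorial (k - 1) : ℝ)))
          * ∫ z in Real.exp (-φ t)..(1 : ℝ), z ^ (k - 1) * (1 - z) ^ (l - k) := by
  have hφderiv : ∀ s, HasDerivAt φ (f s) s := fun s => by
    rw [funext hφ]
    exact hf.integral_hasStrictDerivAt 0 s |>.hasDerivAt
  have hφ0 : φ 0 = 0 := by simp [hφ]
  have hB := B_eq_negBinomialWeight hf hφderiv hφ0 hBdiag hBrec
  intro k l hk hkl t _
  obtain ⟨j, rfl⟩ : ∃ j, k = j + 1 := ⟨k - 1, by omega⟩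
  obtain ⟨m, rfl⟩ : ∃ m, l = j + 1 + m := ⟨l - (j + 1), by omega⟩
  have hl : j + 1 + m - 1 = j + m := by omega
  have hlk : j + 1 + m - (j + 1) = m := by omega
  refine ⟨?_, ?_⟩
  · rw [hB, negBinomialWeight, exp_neg_natCast_mul, hl, hlk, Nat.add_sub_cancel]
  · rw [A_eq_betaTail hB hAdiag hArec, betaTail, hlk, Nat.add_sub_cancel]

/-- **Closed-form evaluation of the iterated integrals** (Lemma 2.12).
With `φ(t) = ∫₀ᵗ f`, the coefficients `B_k^l` and `A_k^l` defined by the recursions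
`B_k^k(t) = e^{−kφ(t)}`,
`B_k^l(t) = k ∫₀ᵗ e^{−k(φ(t)−φ(s))} f(s) B_{k+1}^l(s) ds` for `k < l`,
`A_k^k(t) = 1 − e^{−kφ(t)}`, `A_k^l(t) = A_k^{l−1}(t) − B_k^l(t)` for `k < l`,
are given by
`B_k^l(t) = C(l−1,k−1) (1−e^{−φ(t)})^{l−k} e^{−kφ(t)}` and
`A_k^l(t) = (l!/((l−k)!(k−1)!)) ∫_{e^{−φ(t)}}^1 z^{k−1}(1−z)^{l−k} dz`;
the latter is exactly the tail probability `P(Y > e^{−φ(t)})` of the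
`Beta(k, l−k+1)` distribution. -/
theorem iterated_integrals_closed_form
    (f : ℝ → ℝ) (hf : Continuous f) (hf0 : ∀ t, 0 ≤ f t)
    (φ : ℝ → ℝ) (hφ : ∀ t, φ t = ∫ s in (0 : ℝ)..t, f s)
    (B A : ℕ → ℕ → ℝ → ℝ)
    (hBdiag : ∀ k, 1 ≤ k → ∀ t, B k k t = Real.exp (-(k : ℝ) * φ t))
    (hBrec : ∀ k l, 1 ≤ k → k < l → ∀ t,
      B k l t = (k : ℝ) * ∫ s in (0 : ℝ)..t,
        Real.exp (-(k : ℝ) * (φ t - φ s)) * f s * B (k + 1) l s)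
    (hAdiag : ∀ k, 1 ≤ k → ∀ t, A k k t = 1 - Real.exp (-(k : ℝ) * φ t))
    (hArec : ∀ k l, 1 ≤ k → k < l → ∀ t, A k l t = A k (l - 1) t - B k l t) :
    ∀ k l, 1 ≤ k → k ≤ l → ∀ t, 0 ≤ t →
      B k l t = (Nat.choose (l - 1) (k - 1) : ℝ)
          * (1 - Real.exp (-φ t)) ^ (l - k) * Real.exp (-(k : ℝ) * φ t)
      ∧ A k l t = ((Nat.factorial l : ℝ)
            / ((Nat.factorial (l - k) : ℝ) * (Nat.factorial (k - 1) : ℝ)))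
          * ∫ z in Real.exp (-φ t)..(1 : ℝ), z ^ (k - 1) * (1 - z) ^ (l - k) :=
  iterated_integrals_closed_form_general f hf φ hφ B A hBdiag hBrec hAdiag hArec
end
end
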